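/- Let m ≥ 1 and let G = C₆ᵐ × C₂ be the direct product of m copies of the cyclic group of order 6 (with generators a₁,…,a_m) and a cyclic group of order 2 (with generator h). In 𝔽₂[G], let u_m = ∏_{i=1}^{m} (a_i + a_i² + a_i³ + a_i⁴ + a_i⁵) and u = 1 + h·u_m. Then the minimum distance of the code generated by u equals 2^{m+1}. -/

import Mathlib

noncomputable section

open MonoidAlgebra

/-- The code generated by `u` in a group algebra: the `R`-span of `{g • u : g ∈ G}`. -/
def codeGen {R : Type*} [CommSemiring R] {G : Type*} [Monoid G]
    (u : MonoidAlgebra R G) : Submodule R (MonoidAlgebra R G) :=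
  Submodule.span R (Set.range fun g : G => MonoidAlgebra.of R G g * u)

/-- The weight (support size) of an element of a group algebra. -/
def wt {R : Type*} [Semiring R] {G : Type*} (x : MonoidAlgebra R G) : ℕ :=
  x.coeff.support.card

/-- The minimum distance of the code generated by `u`: the least weight of a nonzero
element of the code. -/
def minDist {R : Type*} [CommSemiring R] {G : Type*} [Monoid G]
    (u : MonoidAlgebra R G) : ℕ :=
  sInf {n | ∃ x ∈ codeGen u, x ≠ 0 ∧ wt x = n}

/-- The group `C₆ᵐ × C₂`, written multiplicatively. -/
abbrev Gp (m : ℕ) : Type := Multiplicative ((Fin m → ZMod 6) × ZMod 2)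

/-- The generator `aᵢ` of the `i`-th copy of `C₆`. -/
def agen (m : ℕ) (i : Fin m) : Gp m := Multiplicative.ofAdd (Pi.single i 1, 0)

/-- The generator `h` of the `C₂` factor. -/
def hgen (m : ℕ) : Gp m := Multiplicative.ofAdd (0, 1)

/-- `u_m = ∏ᵢ (aᵢ + aᵢ² + aᵢ³ + aᵢ⁴ + aᵢ⁵)` in `𝔽₂[C₆ᵐ × C₂]`. -/
def um (m : ℕ) : MonoidAlgebra (ZMod 2) (Gp m) :=
  ∏ i : Fin m,
    (of (ZMod 2) (Gp m) (agen m i) + of (ZMod 2) (Gp m) (agen m i) ^ 2 +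
      of (ZMod 2) (Gp m) (agen m i) ^ 3 + of (ZMod 2) (Gp m) (agen m i) ^ 4 +
      of (ZMod 2) (Gp m) (agen m i) ^ 5)

/-- `u = 1 + h·u_m`. -/
def uu (m : ℕ) : MonoidAlgebra (ZMod 2) (Gp m) :=
  1 + of (ZMod 2) (Gp m) (hgen m) * um m

/-
In characteristic 2, `aᵢ + aᵢ² + ⋯ + aᵢ⁵ = 1 + σᵢ` where `σᵢ` is the sum of the subgroup `⟨aᵢ⟩`,
and `(1 + σᵢ)² = 1`; so `u_m = ∏ᵢ (1 + σᵢ)` is an involution. Cutting a codeword `x·u` along the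
`C₂` factor gives the two halves `y` and `y·u_m`, hence its weight is
`wt y + wt (y·u_m) ≥ 2 √(wt y · wt (y·u_m))`. The heart of the proof is the uncertainty-type bound
`wt y · wt (y·u_m) ≥ 4^m` for `y ≠ 0`, gained one factor `1 + σᵢ` at a time: cutting `y` along the
cosets of the kernel of the `i`-th coordinate into six slices `u_j`, the slices of `y·v·(1 + σᵢ)`
are `(u_j + s)·v` with `s = ∑ u_j`, and sorting the `j` by whether `u_j` is `0`, `s` or neither,
Cauchy–Schwarz gains a factor `4`. The bound is attained by `∏ᵢ (1 + aᵢ³) · u`, of weight `2^(m+1)`.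
-/

lemma CharTwo.nsmul_eq_zero_of_even {A : Type*} [Ring A] [CharP A 2] {n : ℕ} (hn : Even n)
    (x : A) : n • x = 0 := by
  rw [nsmul_eq_mul, CharTwo.natCast_eq_ite, if_pos hn, zero_mul]

lemma Finset.sum_eq_filter_add_filter_add_filter {ι M : Type*} [Fintype ι] [AddCommMonoid M]
    (p q : ι → Prop) [DecidablePred p] [DecidablePred q] (f : ι → M) :
    ∑ j, f j = ∑ j with p j, f j + (∑ j with ¬p j ∧ q j, f j + ∑ j with ¬p j ∧ ¬q j, f j) := by
  rw [← Finset.sum_filter_add_sum_filter_not Finset.univ p,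
    ← Finset.sum_filter_add_sum_filter_not (Finset.univ.filter fun j => ¬p j) q,
    Finset.filter_filter, Finset.filter_filter]

lemma sum_multiplicative_zmod_two {M : Type*} [AddCommMonoid M]
    (f : Multiplicative (ZMod 2) → M) : ∑ h, f h = f 1 + f (.ofAdd 1) :=
  Fin.sum_univ_two f

lemma Nat.two_mul_le_add_of_mul_self_le {k u v : ℕ} (h : k * k ≤ u * v) : 2 * k ≤ u + v := by
  nlinarith [sq_nonneg ((u : ℤ) - v)]

lemma Finset.card_mul_card_mul_le_sum_mul_sum {ι : Type*} (s : Finset ι) (x y : ι → ℕ) {C : ℕ}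
    (h : ∀ i ∈ s, C ≤ x i * y i) : s.card * s.card * C ≤ (∑ i ∈ s, x i) * ∑ i ∈ s, y i := by
  classical
  induction s using Finset.induction_on with
  | empty => simp
  | @insert a s ha ih =>
    have hCa := h a (Finset.mem_insert_self a s)
    have ih := ih fun i hi => h i (Finset.mem_insert_of_mem hi)
    rw [Finset.sum_insert ha, Finset.sum_insert ha, Finset.card_insert_of_notMem ha]
    have hcross : 2 * (s.card * C) ≤ x a * ∑ i ∈ s, y i + (∑ i ∈ s, x i) * y a :=
      Nat.two_mul_le_add_of_mul_self_le <| calc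
        s.card * C * (s.card * C) = s.card * s.card * C * C := by ring
        _ ≤ (∑ i ∈ s, x i) * (∑ i ∈ s, y i) * (x a * y a) := Nat.mul_le_mul ih hCa
        _ = _ := by ring
    nlinarith

lemma four_mul_le_mul_of_le {p r α β A B C : ℕ} (hpr : 5 ≤ p + r) (hC : C ≤ α * β)
    (hαA : α ≤ A) (hcs : r * r * C ≤ (r * α + A) * B) : 4 * C ≤ A * (p * β + B) := by
  have hAβ : C ≤ A * β := hC.trans (Nat.mul_le_mul_right β hαA)
  have hAB : r * r * C ≤ (r + 1) * (A * B) :=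
    hcs.trans (by nlinarith [Nat.mul_le_mul_left r hαA])
  have hcount : 4 * (r + 1) ≤ p * (r + 1) + r * r := by nlinarith
  -- `(r + 1) · A · (pβ + B) ≥ (p (r + 1) + r²) · C`
  refine Nat.le_of_mul_le_mul_left ?_ r.succ_pos
  nlinarith [Nat.mul_le_mul_left (p * (r + 1)) hAβ]

/-- The counting behind one step of the product bound: `p`, `q`, `r` count the slices equal to
`0`, equal to their sum `s`, and the others; `α = wt s`, `β = wt (s·v)`, and `A`, `B` are the
weights of the other slices before and after the step. -/
lemma four_mul_le_mul {p q r α β A B C : ℕ} (hn : 5 ≤ p + q + r) (hC : C ≤ α * β)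
    (hα : α ≤ q * α + A) (hβ : β ≤ p * β + B)
    (hX : r * r * C ≤ (r * α + A) * B) (hY : r * r * C ≤ A * (r * β + B)) :
    4 * C ≤ (q * α + A) * (p * β + B) := by
  rcases Nat.eq_zero_or_pos q with rfl | hq1
  · simpa using four_mul_le_mul_of_le (by omega) hC (by simpa using hα) hX
  rcases Nat.eq_zero_or_pos p with rfl | hp1
  · simpa [mul_comm] using four_mul_le_mul_of_le (p := q) (r := r) (α := β) (β := α) (A := B)
      (B := A) (by omega) (by rwa [mul_comm]) (by simpa using hβ) (by linarith [hY])
  have hR : r * C ≤ (α + A) * B := by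
    rcases Nat.eq_zero_or_pos r with rfl | hr1
    · simp
    · refine Nat.le_of_mul_le_mul_left ?_ hr1
      nlinarith [Nat.mul_le_mul_right B (Nat.le_mul_of_pos_left A hr1)]
  have hqp : 4 ≤ q * p + r := by nlinarith
  calc 4 * C ≤ q * p * C + r * C := by nlinarith
    _ ≤ q * p * (α * β) + (α + A) * B := Nat.add_le_add (Nat.mul_le_mul_left _ hC) hR
    _ ≤ q * p * (α * β) + q * α * B + p * (A * β) + A * B := by
      have := Nat.mul_le_mul_right B (Nat.le_mul_of_pos_left α hq1)
      rw [add_mul]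
      omega
    _ = (q * α + A) * (p * β + B) := by ring

namespace MonoidAlgebra

section Weight

variable {R G : Type*} [Semiring R]

lemma wt_eq_zero_iff {x : MonoidAlgebra R G} : wt x = 0 ↔ x = 0 := by
  rw [wt, Finset.card_eq_zero, Finsupp.support_eq_empty, coeff_eq_zero]

lemma wt_add_le (x y : MonoidAlgebra R G) : wt (x + y) ≤ wt x + wt y := by
  classical
  exact (Finset.card_le_card Finsupp.support_add).trans (Finset.card_union_le _ _)

lemma wt_sum_le {ι : Type*} (s : Finset ι) (f : ι → MonoidAlgebra R G) :
    wt (∑ i ∈ s, f i) ≤ ∑ i ∈ s, wt (f i) :=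
  Finset.le_sum_of_subadditive wt (wt_eq_zero_iff.mpr rfl).le wt_add_le s f

lemma wt_add_of_disjoint {x y : MonoidAlgebra R G}
    (h : Disjoint x.coeff.support y.coeff.support) : wt (x + y) = wt x + wt y := by
  classical
  rw [wt, coeff_add, Finsupp.support_add_eq h, Finset.card_union_of_disjoint h, wt, wt]

lemma wt_mul_of [Group G] (x : MonoidAlgebra R G) (g : G) : wt (x * of R G g) = wt x := by
  rw [wt, of_apply, support_coeff_mul_single _ _ (by simp), Finset.card_map, wt]

end Weight

instance charP {R G : Type*} [CommRing R] [Monoid G] (p : ℕ) [CharP R p] :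
    CharP (MonoidAlgebra R G) p :=
  charP_of_injective_algebraMap' R p

section Supported

variable {R G : Type*} [CommSemiring R] [Monoid G]

def supportedSubalgebra (K : Submonoid G) : Subalgebra R (MonoidAlgebra R G) :=
  (supported R R (K : Set G)).toSubalgebra
    (fun g hg => by
      rw [Finset.mem_one.mp (support_coeff_one_subset (k := R) hg)]
      exact K.one_mem)
    (fun x y hx hy g hg => by
      classical
      obtain ⟨a, ha, b, hb, rfl⟩ := Finset.mem_mul.mp (support_coeff_mul_subset x y hg)
      exact K.mul_mem (hx ha) (hy hb))

lemma mem_supportedSubalgebra {K : Submonoid G} {x : MonoidAlgebra R G} :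
    x ∈ supportedSubalgebra K ↔ ↑x.coeff.support ⊆ (K : Set G) := Iff.rfl

lemma of_mem_supportedSubalgebra {K : Submonoid G} {g : G} (hg : g ∈ K) :
    of R G g ∈ supportedSubalgebra (R := R) K := by
  rw [mem_supportedSubalgebra, of_apply, coeff_single]
  exact (Finset.coe_subset.mpr Finsupp.support_single_subset).trans (by simpa using hg)

end Supported

section Code

variable {R G : Type*} [CommSemiring R] [Monoid G]

lemma mem_codeGen_iff {u z : MonoidAlgebra R G} : z ∈ codeGen u ↔ ∃ x, z = x * u := by
  constructor
  · intro hz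
    induction hz using Submodule.span_induction with
    | mem z hz =>
      obtain ⟨g, rfl⟩ := hz
      exact ⟨of R G g, rfl⟩
    | zero => exact ⟨0, (zero_mul u).symm⟩
    | add z z' _ _ hz hz' =>
      obtain ⟨x, rfl⟩ := hz
      obtain ⟨x', rfl⟩ := hz'
      exact ⟨x + x', (add_mul x x' u).symm⟩
    | smul r z _ hz =>
      obtain ⟨x, rfl⟩ := hz
      exact ⟨r • x, (smul_mul_assoc r x u).symm⟩
  · rintro ⟨x, rfl⟩
    induction x using MonoidAlgebra.induction_linear with
    | zero => simp
    | add x x' hx hx' => simpa [add_mul] using (codeGen u).add_mem hx hx'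
    | single g r =>
      rw [show single g r = r • of R G g by simp [of_apply], smul_mul_assoc]
      exact (codeGen u).smul_mem r (Submodule.subset_span ⟨g, rfl⟩)

lemma minDist_eq {u : MonoidAlgebra R G} {n : ℕ}
    (hlower : ∀ z ∈ codeGen u, z ≠ 0 → n ≤ wt z) (hupper : ∃ z ∈ codeGen u, z ≠ 0 ∧ wt z = n) :
    minDist u = n :=
  le_antisymm (Nat.sInf_le hupper) <| le_csInf ⟨n, hupper⟩ fun _ ⟨z, hz, hz0, hwt⟩ =>
    hwt ▸ hlower z hz hz0

end Code

section Fiber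

variable {R G H : Type*} [CommSemiring R] [CommGroup G] [CommGroup H] [DecidableEq H]
variable (c : G →* H)

def restrictFiber (h : H) : MonoidAlgebra R G →ₗ[R] MonoidAlgebra R G where
  toFun x := ofCoeff (x.coeff.filter (c · = h))
  map_add' x y := by ext g; simp only [coeff_add, Finsupp.filter_add]
  map_smul' r x := by ext g; simp [Finsupp.filter_smul]

lemma coeff_restrictFiber (h : H) (x : MonoidAlgebra R G) (g : G) :
    (restrictFiber c h x).coeff g = if c g = h then x.coeff g else 0 := rfl

lemma sum_restrictFiber [Fintype H] (x : MonoidAlgebra R G) :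
    ∑ h, restrictFiber c h x = x := by
  ext g
  simp [coeff_sum, Finset.sum_apply', coeff_restrictFiber]

lemma sum_wt_restrictFiber [Fintype H] (x : MonoidAlgebra R G) :
    ∑ h, wt (restrictFiber c h x) = wt x := by
  have hsupp : ∀ h, (restrictFiber c h x).coeff.support = {g ∈ x.coeff.support | c g = h} :=
    fun h => rfl
  simp only [wt, hsupp]
  exact (Finset.card_eq_sum_card_fiberwise fun g _ => Finset.mem_univ (c g)).symm

lemma restrictFiber_mul_of (h : H) (x : MonoidAlgebra R G) (k : G) :
    restrictFiber c h x * of R G k = restrictFiber c (h * c k) (x * of R G k) := by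
  ext g
  simp only [of_apply, coeff_mul_single_apply, coeff_restrictFiber, map_mul, map_inv,
    mul_inv_eq_iff_eq_mul, mul_one]

end Fiber

section Slice

variable {R G H : Type*} [CommSemiring R] [CommGroup G] [CommGroup H] [DecidableEq H]
variable (c : G →* H) (e : H →* G)

/-- The coordinates of `x` in `R[G] = ⨁ₕ R[ker c] · e h`: the part of `x` over `h`, moved into
`ker c`. -/
def slice (h : H) : MonoidAlgebra R G →ₗ[R] MonoidAlgebra R G :=
  LinearMap.mulRight R (of R G (e h)⁻¹) ∘ₗ restrictFiber c h

lemma slice_mul_of_self (h : H) (x : MonoidAlgebra R G) :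
    slice c e h x * of R G (e h) = restrictFiber c h x := by
  rw [slice, LinearMap.comp_apply, LinearMap.mulRight_apply, mul_assoc, ← map_mul, inv_mul_cancel,
    map_one, mul_one]

lemma sum_slice_mul_of [Fintype H] (x : MonoidAlgebra R G) :
    ∑ h, slice c e h x * of R G (e h) = x := by
  simp only [slice_mul_of_self, sum_restrictFiber]

lemma sum_wt_slice [Fintype H] (x : MonoidAlgebra R G) : ∑ h, wt (slice c e h x) = wt x := by
  simp only [slice, LinearMap.comp_apply, LinearMap.mulRight_apply, wt_mul_of,
    sum_wt_restrictFiber]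

lemma slice_mul_of {k : G} (hk : c k = 1) (h : H) (x : MonoidAlgebra R G) :
    slice c e h (x * of R G k) = slice c e h x * of R G k := by
  simp only [slice, LinearMap.comp_apply, LinearMap.mulRight_apply, restrictFiber_mul_of, hk,
    mul_one, mul_right_comm _ (of R G k)]

variable {c e}

lemma slice_mul_of_section (hce : ∀ h, c (e h) = h) (h k : H) (x : MonoidAlgebra R G) :
    slice c e h (x * of R G (e k)) = slice c e (h * k⁻¹) x := by
  have := restrictFiber_mul_of c (h * k⁻¹) x (e k)
  rw [hce, inv_mul_cancel_right] at this
  simp only [slice, LinearMap.comp_apply, LinearMap.mulRight_apply, ← this, mul_assoc, ← map_mul,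
    map_mul e, map_inv]
  congr 2
  group

lemma slice_mul {w : MonoidAlgebra R G} (hw : w ∈ supportedSubalgebra (MonoidHom.mker c)) (h : H)
    (x : MonoidAlgebra R G) : slice c e h (x * w) = slice c e h x * w := by
  replace hw : w ∈ Submodule.span R ((fun g => single g 1) '' MonoidHom.mker c) := by
    rwa [← supported_eq_span_single]
  induction hw using Submodule.span_induction with
  | mem w hw =>
    obtain ⟨k, hk, rfl⟩ := hw
    exact slice_mul_of c e hk h x
  | zero => simp
  | add w w' _ _ hw hw' => simp only [mul_add, map_add, hw, hw']
  | smul r w _ hw => simp only [mul_smul_comm, map_smul, hw]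

end Slice

section RangeSum

variable {R G H : Type*} [CommSemiring R] [CommGroup G] [CommGroup H] [Fintype H]

def rangeSum (e : H →* G) : MonoidAlgebra R G := ∑ h, of R G (e h)

variable {e : H →* G}

lemma of_mul_rangeSum (k : H) : of R G (e k) * rangeSum e = rangeSum e := by
  simp only [rangeSum, Finset.mul_sum, ← map_mul]
  exact Fintype.sum_equiv (Equiv.mulLeft k) _ _ fun _ => rfl

lemma rangeSum_mem {H' : Type*} [MulOneClass H'] {c : G →* H'} (hc : ∀ h, c (e h) = 1) :
    rangeSum e ∈ supportedSubalgebra (R := R) (MonoidHom.mker c) :=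
  Subalgebra.sum_mem _ fun h _ => of_mem_supportedSubalgebra (hc h)

lemma slice_mul_rangeSum [DecidableEq H] {c : G →* H} (hce : ∀ h, c (e h) = h) (h : H)
    (x : MonoidAlgebra R G) : slice c e h (x * rangeSum e) = ∑ k, slice c e k x := by
  simp only [rangeSum, Finset.mul_sum, map_sum, slice_mul_of_section hce]
  exact Fintype.sum_equiv (Equiv.divLeft h) _ _ fun _ => by simp [div_eq_mul_inv]

end RangeSum

lemma prod_one_add_rangeSum_mem {R G H ι : Type*} [CommSemiring R] [CommGroup G] [CommGroup H]
    [Fintype H] {c : ι → G →* H} {e : ι → H →* G} (hce : ∀ i j, i ≠ j → ∀ h, c i (e j h) = 1)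
    {S : Finset ι} {i : ι} (hi : i ∉ S) :
    ∏ j ∈ S, (1 + rangeSum (e j)) ∈ supportedSubalgebra (R := R) (MonoidHom.mker (c i)) :=
  Subalgebra.prod_mem _ fun j hj =>
    add_mem (one_mem _) (rangeSum_mem (hce i j (ne_of_mem_of_not_mem hj hi).symm))

section CharTwo

variable {R G H : Type*} [CommRing R] [CharP R 2] [CommGroup G] [CommGroup H] [Fintype H]
variable {e : H →* G}

lemma rangeSum_mul_self (hH : Even (Fintype.card H)) : rangeSum e * rangeSum (R := R) e = 0 := by
  nth_rw 1 [rangeSum]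
  rw [Finset.sum_mul, Finset.sum_congr rfl fun k _ => of_mul_rangeSum k, Finset.sum_const,
    Finset.card_univ, CharTwo.nsmul_eq_zero_of_even hH]

lemma one_add_rangeSum_mul_self (hH : Even (Fintype.card H)) :
    (1 + rangeSum e) * (1 + rangeSum (R := R) e) = 1 := by
  rw [CharTwo.add_mul_self, mul_one, rangeSum_mul_self hH, add_zero]

lemma one_add_of_mul_one_add_rangeSum (k : H) :
    (1 + of R G (e k)) * (1 + rangeSum e) = 1 + of R G (e k) := by
  rw [mul_add, mul_one, add_mul, one_mul, of_mul_rangeSum, CharTwo.add_self_eq_zero, add_zero]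

end CharTwo

section Core

variable {R G ι : Type*} [CommRing R] [Monoid G] [Fintype ι] {v : MonoidAlgebra R G} {C : ℕ}

lemma sum_add_sum_eq_sum [CharP R 2] (hι : Even (Fintype.card ι)) (u : ι → MonoidAlgebra R G) :
    ∑ j, (u j + ∑ k, u k) = ∑ k, u k := by
  rw [Finset.sum_add_distrib, Finset.sum_const, Finset.card_univ,
    CharTwo.nsmul_eq_zero_of_even hι, add_zero]

lemma le_add_wt_mul_wt_add_mul [CharP R 2] (hv : ∀ z, z ≠ 0 → C ≤ wt z * wt (z * v))
    {u s : MonoidAlgebra R G} (h : u ≠ s) : C ≤ (wt s + wt u) * wt ((u + s) * v) :=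
  (hv _ (mt CharTwo.add_eq_zero.mp h)).trans
    (Nat.mul_le_mul_right _ ((wt_add_le _ _).trans_eq (add_comm _ _)))

lemma le_wt_mul_add_wt_add_mul [CharP R 2] (hv : ∀ z, z ≠ 0 → C ≤ wt z * wt (z * v))
    {u s : MonoidAlgebra R G} (h : u ≠ 0) : C ≤ wt u * (wt (s * v) + wt ((u + s) * v)) := by
  refine (hv u h).trans (Nat.mul_le_mul_left _ ?_)
  calc wt (u * v) = wt (s * v + (u + s) * v) := by
        rw [← add_mul, add_left_comm, CharTwo.add_self_eq_zero, add_zero]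
    _ ≤ _ := wt_add_le _ _

lemma four_mul_le_of_sum_eq_zero (hv : ∀ z, z ≠ 0 → C ≤ wt z * wt (z * v))
    {u : ι → MonoidAlgebra R G} (hu : u ≠ 0) (hs : ∑ j, u j = 0) :
    4 * C ≤ (∑ j, wt (u j)) * ∑ j, wt (u j * v) := by
  classical
  set N := Finset.univ.filter fun j => u j ≠ 0
  have hN : 2 ≤ N.card := by
    by_contra! hN
    obtain ⟨j, hj⟩ := Function.ne_iff.mp hu
    have hjN : j ∈ N := by simpa [N] using hj
    have hsj : ∑ k, u k = u j := Finset.sum_eq_single j (fun k _ hk => by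
      by_contra hk0
      exact hk (Finset.card_le_one.mp (by omega) k (by simpa [N] using hk0) j hjN)) (by simp)
    exact hj (hsj ▸ hs)
  calc 4 * C ≤ N.card * N.card * C := Nat.mul_le_mul_right C (Nat.mul_le_mul hN hN)
    _ ≤ (∑ j ∈ N, wt (u j)) * ∑ j ∈ N, wt (u j * v) :=
      Finset.card_mul_card_mul_le_sum_mul_sum N _ _ fun j hj => hv _ (Finset.mem_filter.mp hj).2
    _ ≤ _ := Nat.mul_le_mul (Finset.sum_le_sum_of_subset (Finset.subset_univ N))
      (Finset.sum_le_sum_of_subset (Finset.subset_univ N))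

lemma four_mul_le_of_sum_ne_zero [CharP R 2] (hι : Even (Fintype.card ι))
    (hι5 : 5 ≤ Fintype.card ι) (hv : ∀ z, z ≠ 0 → C ≤ wt z * wt (z * v))
    {u : ι → MonoidAlgebra R G} (hs : ∑ j, u j ≠ 0) :
    4 * C ≤ (∑ j, wt (u j)) * ∑ j, wt ((u j + ∑ k, u k) * v) := by
  classical
  set s := ∑ j, u j
  set P := Finset.univ.filter fun j => u j = 0
  set Q := Finset.univ.filter fun j => ¬u j = 0 ∧ u j = s
  set T := Finset.univ.filter fun j => ¬u j = 0 ∧ ¬u j = s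
  have splitℕ (f : ι → ℕ) : ∑ j, f j = ∑ j ∈ P, f j + (∑ j ∈ Q, f j + ∑ j ∈ T, f j) :=
    Finset.sum_eq_filter_add_filter_add_filter _ _ f
  have memP {j} (hj : j ∈ P) : u j = 0 := (Finset.mem_filter.mp hj).2
  have memQ {j} (hj : j ∈ Q) : u j = s := (Finset.mem_filter.mp hj).2.2
  have memT {j} (hj : j ∈ T) : u j ≠ 0 ∧ u j ≠ s := (Finset.mem_filter.mp hj).2
  have hX : ∑ j, wt (u j) = Q.card * wt s + ∑ j ∈ T, wt (u j) := by
    rw [splitℕ, Finset.sum_eq_zero fun j hj => by rw [memP hj, wt_eq_zero_iff],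
      Finset.sum_congr rfl fun j hj => by rw [memQ hj], Finset.sum_const, smul_eq_mul, zero_add]
  have hY : ∑ j, wt ((u j + s) * v) = P.card * wt (s * v) + ∑ j ∈ T, wt ((u j + s) * v) := by
    rw [splitℕ, Finset.sum_congr rfl fun j hj => by rw [memP hj, zero_add], Finset.sum_const,
      smul_eq_mul, Finset.sum_eq_zero fun j hj => by
        rw [memQ hj, CharTwo.add_self_eq_zero, zero_mul, wt_eq_zero_iff], zero_add]
  have hcard : P.card + Q.card + T.card = Fintype.card ι := by
    simpa [add_assoc] using (splitℕ fun _ => 1).symm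
  have hα : wt s ≤ Q.card * wt s + ∑ j ∈ T, wt (u j) := hX ▸ wt_sum_le _ u
  have hβ : wt (s * v) ≤ P.card * wt (s * v) + ∑ j ∈ T, wt ((u j + s) * v) := by
    have hsum : ∑ j, (u j + s) * v = s * v := by rw [← Finset.sum_mul, sum_add_sum_eq_sum hι u]
    rw [← hY, ← hsum]
    exact wt_sum_le _ _
  have hsumT (x : ℕ) (f : ι → ℕ) : ∑ j ∈ T, (x + f j) = T.card * x + ∑ j ∈ T, f j := by
    rw [Finset.sum_add_distrib, Finset.sum_const, smul_eq_mul]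
  rw [hX, hY]
  refine four_mul_le_mul (hι5.trans_eq hcard.symm) (hv s hs) hα hβ ?_ ?_
  · simpa only [hsumT] using Finset.card_mul_card_mul_le_sum_mul_sum T _ _
      fun j hj => le_add_wt_mul_wt_add_mul hv (memT hj).2
  · simpa only [hsumT] using Finset.card_mul_card_mul_le_sum_mul_sum T _ _
      fun j hj => le_wt_mul_add_wt_add_mul (s := s) hv (memT hj).1

end Core

section Step

variable {R G H : Type*} [CommRing R] [CommGroup G] [CommGroup H] [Fintype H]
  [DecidableEq H] {c : G →* H} {e : H →* G} {v : MonoidAlgebra R G}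

lemma slice_mul_mul_one_add_rangeSum (hce : ∀ h, c (e h) = h)
    (hv : v ∈ supportedSubalgebra (MonoidHom.mker c)) (h : H) (y : MonoidAlgebra R G) :
    slice c e h (y * (v * (1 + rangeSum e))) = (slice c e h y + ∑ k, slice c e k y) * v := by
  rw [mul_add, mul_one, mul_add, ← mul_assoc, map_add, slice_mul_rangeSum hce, slice_mul hv,
    Finset.sum_congr rfl fun k _ => slice_mul hv k y, ← Finset.sum_mul, add_mul]

lemma four_mul_le_wt_mul_wt_mul_one_add_rangeSum [CharP R 2] (hce : ∀ h, c (e h) = h)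
    (hH : Even (Fintype.card H)) (hH5 : 5 ≤ Fintype.card H)
    (hv : v ∈ supportedSubalgebra (MonoidHom.mker c)) {C : ℕ}
    (hC : ∀ z, z ≠ 0 → C ≤ wt z * wt (z * v)) {y : MonoidAlgebra R G} (hy : y ≠ 0) :
    4 * C ≤ wt y * wt (y * (v * (1 + rangeSum e))) := by
  have hu : (fun h => slice c e h y) ≠ 0 := fun h0 => hy <| by
    rw [← sum_slice_mul_of c e y]
    simp [funext_iff.mp h0]
  rw [← sum_wt_slice c e y, ← sum_wt_slice c e (y * (v * (1 + rangeSum e)))]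
  simp only [slice_mul_mul_one_add_rangeSum hce hv]
  by_cases hs : ∑ k, slice c e k y = 0
  · simpa [hs] using four_mul_le_of_sum_eq_zero hC hu hs
  · exact four_mul_le_of_sum_ne_zero hH hH5 hC hs

end Step

section Product

variable {R G H ι : Type*} [CommRing R] [CharP R 2] [CommGroup G] [CommGroup H] [Fintype H]
  [DecidableEq H] {c : ι → G →* H} {e : ι → H →* G}

lemma four_pow_card_le_wt_mul_wt_mul_prod (hce : ∀ i h, c i (e i h) = h)
    (hce' : ∀ i j, i ≠ j → ∀ h, c i (e j h) = 1)
    (hH : Even (Fintype.card H)) (hH5 : 5 ≤ Fintype.card H) (S : Finset ι)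
    {y : MonoidAlgebra R G} (hy : y ≠ 0) :
    4 ^ S.card ≤ wt y * wt (y * ∏ i ∈ S, (1 + rangeSum (e i))) := by
  classical
  induction S using Finset.induction_on generalizing y with
  | empty =>
    have hwt : wt y ≠ 0 := fun h => hy (wt_eq_zero_iff.mp h)
    simpa [Nat.one_le_iff_ne_zero] using hwt
  | insert i S hi ih =>
    rw [Finset.prod_insert hi, mul_comm (1 + _), Finset.card_insert_of_notMem hi, pow_succ,
      mul_comm]
    exact four_mul_le_wt_mul_wt_mul_one_add_rangeSum (hce i) hH hH5
      (prod_one_add_rangeSum_mem hce' hi) (fun z hz => ih hz) hy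

end Product

section Involution

variable {R G : Type*} [CommRing R] [CommGroup G] {c : G →* Multiplicative (ZMod 2)}
  {e : Multiplicative (ZMod 2) →* G} {v : MonoidAlgebra R G}

lemma wt_eq_wt_slice_add_wt_slice (x : MonoidAlgebra R G) :
    wt x = wt (slice c e 1 x) + wt (slice c e (.ofAdd 1) x) :=
  (sum_wt_slice c e x).symm.trans (sum_multiplicative_zmod_two _)

lemma slice_ofAdd_one_mul_one_add (hce : ∀ h, c (e h) = h)
    (hv : v ∈ supportedSubalgebra (MonoidHom.mker c)) (hvv : v * v = 1) (x : MonoidAlgebra R G) :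
    slice c e (.ofAdd 1) (x * (1 + of R G (e (.ofAdd 1)) * v)) =
      slice c e 1 (x * (1 + of R G (e (.ofAdd 1)) * v)) * v := by
  have hinv : (Multiplicative.ofAdd (1 : ZMod 2))⁻¹ = .ofAdd 1 := by decide
  simp only [mul_add, mul_one, ← mul_assoc, map_add, slice_mul hv, slice_mul_of_section hce,
    one_mul, hinv, add_mul, mul_assoc _ v v, hvv]
  exact add_comm _ _

lemma two_mul_le_wt_mul_one_add (hce : ∀ h, c (e h) = h)
    (hv : v ∈ supportedSubalgebra (MonoidHom.mker c)) (hvv : v * v = 1) {C : ℕ}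
    (hC : ∀ y, y ≠ 0 → C * C ≤ wt y * wt (y * v)) {x : MonoidAlgebra R G}
    (hx : x * (1 + of R G (e (.ofAdd 1)) * v) ≠ 0) :
    2 * C ≤ wt (x * (1 + of R G (e (.ofAdd 1)) * v)) := by
  set z := x * (1 + of R G (e (.ofAdd 1)) * v)
  have hz : slice c e (.ofAdd 1) z = slice c e 1 z * v := slice_ofAdd_one_mul_one_add hce hv hvv x
  have hy : slice c e 1 z ≠ 0 := fun h0 => hx <| by
    rw [← sum_slice_mul_of c e z, sum_multiplicative_zmod_two, hz, h0]
    simp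
  rw [wt_eq_wt_slice_add_wt_slice, hz]
  exact Nat.two_mul_le_add_of_mul_self_le (hC _ hy)

end Involution

section Disjoint

variable {R G H : Type*} [CommSemiring R] [CommGroup G] [CommGroup H]

lemma wt_mul_one_add_of {c : G →* H} {x : MonoidAlgebra R G}
    (hx : x ∈ supportedSubalgebra (MonoidHom.mker c)) {g : G} (hg : c g ≠ 1) :
    wt (x * (1 + of R G g)) = 2 * wt x := by
  have hdisj : Disjoint x.coeff.support (x * of R G g).coeff.support := by
    rw [of_apply, support_coeff_mul_single _ _ (by simp)]
    refine Finset.disjoint_left.mpr fun k hk hk' => hg ?_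
    obtain ⟨k, hkx, rfl⟩ := Finset.mem_map.mp hk'
    have h1 : c k = 1 := hx hkx
    have h2 : c (k * g) = 1 := hx hk
    rwa [map_mul, h1, one_mul] at h2
  rw [mul_add, mul_one, wt_add_of_disjoint hdisj, wt_mul_of, two_mul]

lemma wt_prod_one_add_of [Nontrivial R] {ι : Type*} {c : ι → G →* H} {e : ι → H →* G}
    (hce : ∀ i h, c i (e i h) = h) (hce' : ∀ i j, i ≠ j → ∀ h, c i (e j h) = 1)
    {k : H} (hk : k ≠ 1) (S : Finset ι) :
    wt (∏ i ∈ S, (1 + of R G (e i k))) = 2 ^ S.card := by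
  classical
  induction S using Finset.induction_on with
  | empty => simp [wt, one_def]
  | insert i S hi ih =>
    have hmem : ∏ j ∈ S, (1 + of R G (e j k)) ∈ supportedSubalgebra (MonoidHom.mker (c i)) :=
      Subalgebra.prod_mem _ fun j hj => add_mem (one_mem _)
        (of_mem_supportedSubalgebra (hce' i j (ne_of_mem_of_not_mem hj hi).symm k))
    rw [Finset.prod_insert hi, mul_comm, wt_mul_one_add_of hmem (by rwa [hce]), ih,
      Finset.card_insert_of_notMem hi, pow_succ']

end Disjoint

lemma one_add_rangeSum_eq_sum_pow {R G : Type*} [CommRing R] [CharP R 2] [CommGroup G]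
    (e : Multiplicative (ZMod 6) →* G) :
    1 + rangeSum e = of R G (e (.ofAdd 1)) + of R G (e (.ofAdd 1)) ^ 2 +
      of R G (e (.ofAdd 1)) ^ 3 + of R G (e (.ofAdd 1)) ^ 4 + of R G (e (.ofAdd 1)) ^ 5 := by
  have hpow (k : ℕ) : of R G (e (.ofAdd 1)) ^ k = of R G (e (.ofAdd (k : ZMod 6))) := by
    rw [← map_pow, ← map_pow, ← ofAdd_nsmul, nsmul_one]
  have hsum : rangeSum (R := R) e = of R G (e (.ofAdd 0)) + of R G (e (.ofAdd 1)) +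
      of R G (e (.ofAdd 2)) + of R G (e (.ofAdd 3)) + of R G (e (.ofAdd 4)) +
      of R G (e (.ofAdd 5)) :=
    Fin.sum_univ_six _
  rw [hpow 2, hpow 3, hpow 4, hpow 5, hsum, ofAdd_zero, map_one, map_one]
  simp only [← add_assoc, CharTwo.add_self_eq_zero, zero_add, Nat.cast_ofNat]

end MonoidAlgebra

section Concrete

open MonoidAlgebra

variable (m : ℕ)

def coordC6 (i : Fin m) : Gp m →* Multiplicative (ZMod 6) :=
  AddMonoidHom.toMultiplicative ((Pi.evalAddMonoidHom (fun _ => ZMod 6) i).comp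
    (AddMonoidHom.fst _ _))

def embC6 (i : Fin m) : Multiplicative (ZMod 6) →* Gp m :=
  AddMonoidHom.toMultiplicative ((AddMonoidHom.inl _ _).comp
    (AddMonoidHom.single (fun _ => ZMod 6) i))

def coordC2 : Gp m →* Multiplicative (ZMod 2) :=
  AddMonoidHom.toMultiplicative (AddMonoidHom.snd _ _)

def embC2 : Multiplicative (ZMod 2) →* Gp m :=
  AddMonoidHom.toMultiplicative (AddMonoidHom.inr _ _)

variable {m}

lemma coordC6_embC6 (i j : Fin m) (h : Multiplicative (ZMod 6)) :
    coordC6 m i (embC6 m j h) = if i = j then h else 1 := by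
  by_cases hij : i = j
  · subst hij; simp [coordC6, embC6]
  · simp [coordC6, embC6, hij]

lemma coordC2_embC6 (i : Fin m) (h : Multiplicative (ZMod 6)) : coordC2 m (embC6 m i h) = 1 :=
  rfl

lemma coordC2_embC2 (h : Multiplicative (ZMod 2)) : coordC2 m (embC2 m h) = h := rfl

lemma um_eq_prod : um m = ∏ i, (1 + rangeSum (embC6 m i)) := by
  simp only [one_add_rangeSum_eq_sum_pow]
  rfl

lemma um_mem_supportedSubalgebra :
    um m ∈ supportedSubalgebra (MonoidHom.mker (coordC2 m)) := by
  rw [um_eq_prod]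
  exact Subalgebra.prod_mem _ fun i _ => add_mem (one_mem _) (rangeSum_mem (coordC2_embC6 i))

lemma um_mul_self : um m * um m = 1 := by
  rw [um_eq_prod, ← Finset.prod_mul_distrib]
  exact Finset.prod_eq_one fun i _ => one_add_rangeSum_mul_self (by decide)

lemma four_pow_le_wt_mul_wt_mul_um {y : MonoidAlgebra (ZMod 2) (Gp m)} (hy : y ≠ 0) :
    4 ^ m ≤ wt y * wt (y * um m) := by
  simpa [um_eq_prod] using four_pow_card_le_wt_mul_wt_mul_prod (c := coordC6 m) (e := embC6 m)
    (fun i h => by simp [coordC6_embC6]) (fun i j hij h => by simp [coordC6_embC6, hij])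
    (by decide) (by decide) Finset.univ hy

lemma le_wt_of_mem_codeGen {z : MonoidAlgebra (ZMod 2) (Gp m)} (hz : z ∈ codeGen (uu m))
    (hz0 : z ≠ 0) : 2 ^ (m + 1) ≤ wt z := by
  obtain ⟨x, rfl⟩ := mem_codeGen_iff.mp hz
  rw [uu] at hz0 ⊢
  rw [pow_succ, mul_comm]
  refine two_mul_le_wt_mul_one_add coordC2_embC2 um_mem_supportedSubalgebra um_mul_self
    (fun y hy => ?_) hz0
  rw [← mul_pow]
  exact four_pow_le_wt_mul_wt_mul_um hy

def cubeProd (m : ℕ) : MonoidAlgebra (ZMod 2) (Gp m) :=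
  ∏ i, (1 + of (ZMod 2) (Gp m) (embC6 m i (.ofAdd 3)))

lemma cubeProd_mul_um : cubeProd m * um m = cubeProd m := by
  rw [um_eq_prod, cubeProd, ← Finset.prod_mul_distrib]
  exact Finset.prod_congr rfl fun i _ => one_add_of_mul_one_add_rangeSum _

lemma wt_cubeProd_mul_uu : wt (cubeProd m * uu m) = 2 ^ (m + 1) := by
  have hmem : cubeProd m ∈ supportedSubalgebra (MonoidHom.mker (coordC2 m)) :=
    Subalgebra.prod_mem _ fun i _ => add_mem (one_mem _)
      (of_mem_supportedSubalgebra (coordC2_embC6 i _))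
  have hwt : wt (cubeProd m) = 2 ^ m := by
    simpa only [cubeProd, Finset.card_univ, Fintype.card_fin] using
      wt_prod_one_add_of (R := ZMod 2) (c := coordC6 m) (e := embC6 m)
        (fun i h => by simp [coordC6_embC6]) (fun i j hij h => by simp [coordC6_embC6, hij])
        (by decide) Finset.univ
  have hh : coordC2 m (hgen m) ≠ 1 := by
    rw [show hgen m = embC2 m (.ofAdd 1) from rfl, coordC2_embC2]
    decide
  rw [uu, mul_add, mul_one, mul_left_comm, cubeProd_mul_um, mul_comm (of _ _ _), ← mul_one_add,
    wt_mul_one_add_of hmem hh, hwt, pow_succ']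

end Concrete

theorem distance_of_C6m_C2_code_general (m : ℕ) :
    minDist (uu m) = 2 ^ (m + 1) := by
  refine minDist_eq (fun _ => le_wt_of_mem_codeGen) ⟨cubeProd m * uu m, ?_, ?_, wt_cubeProd_mul_uu⟩
  · exact mem_codeGen_iff.mpr ⟨cubeProd m, rfl⟩
  · rw [Ne, ← wt_eq_zero_iff, wt_cubeProd_mul_uu]
    positivity

theorem distance_of_C6m_C2_code (m : ℕ) (hm : 1 ≤ m) :
    minDist (uu m) = 2 ^ (m + 1) :=
  distance_of_C6m_C2_code_general m

end
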